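/- arXiv:gr-qc/9610016 — 6 statements merged into one kernel-verified Lean document; each statement's English description precedes it below -/
import Mathlib

section
/- Let k be a natural number and let f, h : ℝ → ℝ both be C^k functions such that f(t) = h(t) for all t > 0 and f(t) = -h(t) for all t < 0. Then the l-th derivative of h vanishes at 0 for every l with 0 ≤ l ≤ k. -/
/-! The `l`-th derivatives of `f` and `h` agree on `t > 0`, and those of `f` and `-h` agree on
`t < 0`. All three are continuous, so passing to the limit at `0` from either side gives
`f⁽ˡ⁾(0) = h⁽ˡ⁾(0)` and `f⁽ˡ⁾(0) = -h⁽ˡ⁾(0)`, whence `h⁽ˡ⁾(0) = 0`. -/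

open Set

theorem iteratedDeriv_eq_of_eqOn_of_mem_closure {𝕜 F : Type*} [NontriviallyNormedField 𝕜]
    [NormedAddCommGroup F] [NormedSpace 𝕜 F] {n : ℕ} {f g : 𝕜 → F} {s : Set 𝕜} {x : 𝕜}
    (hs : IsOpen s) (hfg : EqOn f g s) (hf : Continuous (iteratedDeriv n f))
    (hg : Continuous (iteratedDeriv n g)) (hx : x ∈ closure s) :
    iteratedDeriv n f x = iteratedDeriv n g x :=
  (hfg.iteratedDeriv_of_isOpen hs n).closure hf hg hx

/-- Lemma 1 (analytic core): if a `C^k` function `f` agrees with `h` for `t > 0`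
and with `-h` for `t < 0`, where `h` is also `C^k`, then all derivatives of `h`
up to order `k` vanish at `0`. -/
theorem signature_change_derivatives_vanish (k : ℕ) (f h : ℝ → ℝ)
    (hf : ContDiff ℝ k f) (hh : ContDiff ℝ k h)
    (hpos : ∀ t : ℝ, 0 < t → f t = h t)
    (hneg : ∀ t : ℝ, t < 0 → f t = -h t) :
    ∀ l : ℕ, l ≤ k → iteratedDeriv l h 0 = 0 := by
  intro l hl
  have hlk : (l : WithTop ℕ∞) ≤ k := by exact_mod_cast hl
  have hf_cont := hf.continuous_iteratedDeriv l hlk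
  have hh_cont := hh.continuous_iteratedDeriv l hlk
  have from_right : iteratedDeriv l f 0 = iteratedDeriv l h 0 :=
    iteratedDeriv_eq_of_eqOn_of_mem_closure isOpen_Ioi hpos hf_cont hh_cont (by simp)
  have from_left : iteratedDeriv l f 0 = -iteratedDeriv l h 0 := by
    have hneg_cont : Continuous (iteratedDeriv l (-h)) := by
      rw [funext (iteratedDeriv_neg l h)]
      exact hh_cont.neg
    rw [← iteratedDeriv_neg]
    exact iteratedDeriv_eq_of_eqOn_of_mem_closure isOpen_Iio hneg hf_cont hneg_cont (by simp)
  linarith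
end

section
/- Let J ⊆ ℝ be an interval with 0 ∈ J and let c₁, c₂, c₃ : J → ℝ be differentiable functions satisfying ċᵢ = −(1/2)(c₁+c₂+c₃)·cᵢ on J, with initial values ĉᵢ = cᵢ(0). Then for all t ∈ J one has 2 + t(ĉ₁+ĉ₂+ĉ₃) > 0 and cᵢ(t) = 2ĉᵢ/(2 + t(ĉ₁+ĉ₂+ĉ₃)) for i = 1,2,3. -/
/-!
The sum `S = c₁ + c₂ + c₃` solves the Riccati equation `Ṡ = -S²/2`. Along any solution,
`p = S·(2 + t·S(0)) - 2·S(0)` solves the linear equation `ṗ = -(S/2)·p` with `p(0) = 0`, so Grönwall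
gives `p ≡ 0`. Then `2 + t·S(0)` cannot vanish on `J`: at a zero we would get `S(0) = 0`, making it
identically `2`. Finally each `qᵢ = cᵢ·(2 + t·S(0))` has derivative `-(cᵢ/2)·p = 0`, hence is
constant.
-/

open Set

theorem HasDerivWithinAt.mul_two_add_mul {c S : ℝ → ℝ} {s : Set ℝ} {t : ℝ} (k : ℝ)
    (hc : HasDerivWithinAt c (-(1/2) * S t * c t) s t) :
    HasDerivWithinAt (fun u => c u * (2 + u * k))
      (-(1/2) * c t * (S t * (2 + t * k) - 2 * k)) s t := by
  refine (hc.mul ((hasDerivWithinAt_id t s).mul_const k |>.const_add 2)).congr_deriv ?_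
  simp only [id]
  ring

namespace Set.OrdConnected

variable {J : Set ℝ}

theorem eqOn_zero_of_hasDerivWithinAt_mul (hJ : J.OrdConnected) {a p : ℝ → ℝ} {t₀ : ℝ}
    (ha : ContinuousOn a J) (hp : ∀ t ∈ J, HasDerivWithinAt p (a t * p t) J t)
    (ht₀ : t₀ ∈ J) (hp₀ : p t₀ = 0) : EqOn p 0 J := by
  intro t ht
  have hsub : uIcc t₀ t ⊆ J := hJ.uIcc_subset ht₀ ht
  obtain ⟨K, hK⟩ := (isCompact_uIcc.image_of_continuousOn
    (continuous_nnnorm.comp_continuousOn (ha.mono hsub))).bddAbove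
  have hlip : ∀ u ∈ uIcc t₀ t, LipschitzOnWith K (a u * ·) univ := fun u hu =>
    ((lipschitzWith_smul (a u)).weaken (hK (mem_image_of_mem _ hu))).lipschitzOnWith
  have hcont : ContinuousOn p (uIcc t₀ t) := fun u hu =>
    (hp u (hsub hu)).continuousWithinAt.mono hsub
  have hzero : ∀ u (s : Set ℝ), HasDerivWithinAt (0 : ℝ → ℝ) (a u * (0 : ℝ → ℝ) u) s u :=
    fun u s => by rw [Pi.zero_apply, mul_zero]; exact hasDerivWithinAt_const u s 0
  rcases le_total t₀ t with h | h
  · rw [uIcc_of_le h] at hsub hlip hcont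
    exact ODE_solution_unique_of_mem_Icc_right (s := fun _ => univ)
      (fun u hu => hlip u (Ico_subset_Icc_self hu)) hcont
      (fun u hu => ((hp u (hsub (Ico_subset_Icc_self hu))).mono hsub).mono_of_mem_nhdsWithin
        (Icc_mem_nhdsGE_of_mem hu))
      (fun _ _ => mem_univ _) continuousOn_const (fun u _ => hzero u _) (fun _ _ => mem_univ _)
      hp₀ ⟨h, le_rfl⟩
  · rw [uIcc_of_ge h] at hsub hlip hcont
    exact ODE_solution_unique_of_mem_Icc_left (s := fun _ => univ)
      (fun u hu => hlip u (Ioc_subset_Icc_self hu)) hcont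
      (fun u hu => ((hp u (hsub (Ioc_subset_Icc_self hu))).mono hsub).mono_of_mem_nhdsWithin
        (Icc_mem_nhdsLE_of_mem hu))
      (fun _ _ => mem_univ _) continuousOn_const (fun u _ => hzero u _) (fun _ _ => mem_univ _)
      hp₀ ⟨le_rfl, h⟩

theorem add_mul_pos_of_mul_add_mul_eq (hJ : J.OrdConnected) (h0 : (0 : ℝ) ∈ J) {S : ℝ → ℝ}
    {b k : ℝ} (hb : 0 < b) (hS : ∀ t ∈ J, S t * (b + t * k) = b * k) :
    ∀ t ∈ J, 0 < b + t * k := by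
  intro t ht
  by_contra! hneg
  obtain ⟨u, hu, hu0⟩ := intermediate_value_uIcc (a := 0) (b := t)
    (f := fun u => b + u * k) (by fun_prop) (mem_uIcc.mpr (Or.inr ⟨hneg, by simpa using hb.le⟩))
  have hk : k = 0 := by
    have := hS u (hJ.uIcc_subset h0 ht hu)
    simp only at hu0
    rw [hu0, mul_zero] at this
    exact (mul_eq_zero.mp this.symm).resolve_left hb.ne'
  simp [hk] at hneg
  linarith

theorem riccati_mul_two_add_mul_eq (hJ : J.OrdConnected) (h0 : (0 : ℝ) ∈ J) {S : ℝ → ℝ}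
    (hS : ∀ t ∈ J, HasDerivWithinAt S (-(1/2) * S t * S t) J t) :
    ∀ t ∈ J, S t * (2 + t * S 0) = 2 * S 0 := by
  intro t ht
  have hp := hJ.eqOn_zero_of_hasDerivWithinAt_mul (a := fun u => -(1/2) * S u)
    (p := fun u => S u * (2 + u * S 0) - 2 * S 0)
    (fun u hu => ((hS u hu).continuousWithinAt).const_mul _)
    (fun u hu => ((hS u hu).mul_two_add_mul (S 0)).sub_const _) h0 (by ring) ht
  simpa [sub_eq_zero] using hp

theorem mul_two_add_mul_eq_of_hasDerivWithinAt (hJ : J.OrdConnected) (h0 : (0 : ℝ) ∈ J)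
    {c S : ℝ → ℝ} {k : ℝ} (hS : ∀ t ∈ J, S t * (2 + t * k) = 2 * k)
    (hc : ∀ t ∈ J, HasDerivWithinAt c (-(1/2) * S t * c t) J t) :
    ∀ t ∈ J, c t * (2 + t * k) = 2 * c 0 := by
  intro t ht
  have hp := hJ.eqOn_zero_of_hasDerivWithinAt_mul (a := 0)
    (p := fun u => c u * (2 + u * k) - 2 * c 0) continuousOn_const
    (fun u hu => by simpa [hS u hu] using ((hc u hu).mul_two_add_mul k).sub_const (2 * c 0))
    h0 (by ring) ht
  simpa [sub_eq_zero] using hp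

end Set.OrdConnected

/-- Part (iii) of Theorem 2 (t20): the eigenvalues `cᵢ` of `g^{ij}∂ₜg_{jk}` of a
vacuum solution satisfy `ċᵢ = -(1/2)(c₁+c₂+c₃)·cᵢ`, hence are given explicitly by
`cᵢ(t) = 2·ĉᵢ/(2 + t·(ĉ₁+ĉ₂+ĉ₃))` where `ĉᵢ = cᵢ(0)`, and `2 + t·(ĉ₁+ĉ₂+ĉ₃) > 0`. -/
theorem vacuum_eigenvalue_solution (J : Set ℝ) (hJ : J.OrdConnected) (h0 : (0 : ℝ) ∈ J)
    (c₁ c₂ c₃ : ℝ → ℝ)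
    (h1 : ∀ t ∈ J,
      HasDerivWithinAt c₁ (-(1/2) * (c₁ t + c₂ t + c₃ t) * c₁ t) J t)
    (h2 : ∀ t ∈ J,
      HasDerivWithinAt c₂ (-(1/2) * (c₁ t + c₂ t + c₃ t) * c₂ t) J t)
    (h3 : ∀ t ∈ J,
      HasDerivWithinAt c₃ (-(1/2) * (c₁ t + c₂ t + c₃ t) * c₃ t) J t) :
    ∀ t ∈ J, 0 < 2 + t * (c₁ 0 + c₂ 0 + c₃ 0) ∧
      c₁ t = 2 * c₁ 0 / (2 + t * (c₁ 0 + c₂ 0 + c₃ 0)) ∧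
      c₂ t = 2 * c₂ 0 / (2 + t * (c₁ 0 + c₂ 0 + c₃ 0)) ∧
      c₃ t = 2 * c₃ 0 / (2 + t * (c₁ 0 + c₂ 0 + c₃ 0)) := by
  set S : ℝ → ℝ := fun t => c₁ t + c₂ t + c₃ t
  have hS : ∀ t ∈ J, HasDerivWithinAt S (-(1/2) * S t * S t) J t := fun t ht =>
    (((h1 t ht).add (h2 t ht)).add (h3 t ht)).congr_deriv (by ring)
  have hSq := hJ.riccati_mul_two_add_mul_eq h0 hS
  have hpos := hJ.add_mul_pos_of_mul_add_mul_eq h0 two_pos hSq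
  have hsol : ∀ c : ℝ → ℝ, (∀ t ∈ J, HasDerivWithinAt c (-(1/2) * S t * c t) J t) →
      ∀ t ∈ J, c t = 2 * c 0 / (2 + t * S 0) := fun c hc t ht =>
    (eq_div_iff (hpos t ht).ne').mpr (hJ.mul_two_add_mul_eq_of_hasDerivWithinAt h0 hSq hc t ht)
  exact fun t ht => ⟨hpos t ht, hsol c₁ h1 t ht, hsol c₂ h2 t ht, hsol c₃ h3 t ht⟩
end

section
/- Let J ⊆ ℝ be an interval with 0 ∈ J and let c₁, c₂, c₃ : J → ℝ be differentiable functions satisfying ċᵢ = −(1/2)α·cᵢ + (1/8)E on J, where α = c₁+c₂+c₃ and E = α² − (c₁²+c₂²+c₃²). If c₁c₂ + c₂c₃ + c₃c₁ vanishes at t = 0, then c₁c₂ + c₂c₃ + c₃c₁ vanishes identically on J. -/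
/-!
Put `S = c₁c₂ + c₂c₃ + c₃c₁`. Since `E = 2S`, each `ċᵢ = -(α/2) cᵢ + S/4`, and summing the
product rule gives the linear equation `Ṡ = -(α/2) S`. Multiplied by the integrating factor
`exp (∫ α/2)`, `S` has derivative zero, so it stays zero on the interval once it vanishes at `0`.
-/

open Set

theorem exists_hasDerivAt_of_continuousOn_Icc {F : Type*} [NormedAddCommGroup F]
    [NormedSpace ℝ F] [CompleteSpace F] {a b : ℝ} {g : ℝ → F} (hab : a ≤ b)
    (hg : ContinuousOn g (Icc a b)) :
    ∃ A : ℝ → F, ∀ t ∈ Icc a b, HasDerivAt A (g t) t := by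
  set G : ℝ → F := IccExtend hab ((Icc a b).domRestrict g)
  have hG : Continuous G := hg.domRestrict.Icc_extend'
  refine ⟨fun u => ∫ s in a..u, G s, fun t ht => ?_⟩
  have hGt : G t = g t := IccExtend_of_mem hab _ ht
  exact hGt ▸ hG.integral_hasStrictDerivAt a t |>.hasDerivAt

variable {E : Type*} [NormedAddCommGroup E] [NormedSpace ℝ E] {g : ℝ → ℝ} {f : ℝ → E}

theorem eqOn_zero_of_hasDerivWithinAt_smul_self_Icc {a b t₀ : ℝ}
    (hg : ContinuousOn g (Icc a b))
    (hf : ∀ t ∈ Icc a b, HasDerivWithinAt f (g t • f t) (Icc a b) t)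
    (ht₀ : t₀ ∈ Icc a b) (hft₀ : f t₀ = 0) :
    EqOn f 0 (Icc a b) := by
  obtain ⟨A, hA⟩ := exists_hasDerivAt_of_continuousOn_Icc (ht₀.1.trans ht₀.2) hg
  set φ : ℝ → E := fun t => Real.exp (-A t) • f t
  have hφ : ∀ t ∈ Icc a b, HasDerivWithinAt φ 0 (Icc a b) t := by
    intro t ht
    refine (((hA t ht).neg.exp.hasDerivWithinAt).smul (hf t ht)).congr_deriv ?_
    rw [smul_smul, ← add_smul, mul_neg, add_neg_cancel, zero_smul]
  intro t ht
  have hφt : φ t = φ t₀ := by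
    have := (convex_Icc a b).norm_image_sub_le_of_norm_hasDerivWithin_le hφ
      (fun _ _ => norm_zero.le) ht₀ ht
    rwa [zero_mul, norm_le_zero_iff, sub_eq_zero] at this
  simpa [φ, hft₀, Real.exp_ne_zero] using hφt

theorem Set.OrdConnected.eqOn_zero_of_hasDerivWithinAt_smul_self {J : Set ℝ} {t₀ : ℝ}
    (hJ : J.OrdConnected) (hg : ContinuousOn g J)
    (hf : ∀ t ∈ J, HasDerivWithinAt f (g t • f t) J t)
    (ht₀ : t₀ ∈ J) (hft₀ : f t₀ = 0) :
    EqOn f 0 J := fun t ht =>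
  have hsub : uIcc t₀ t ⊆ J := hJ.uIcc_subset ht₀ ht
  eqOn_zero_of_hasDerivWithinAt_smul_self_Icc (hg.mono hsub)
    (fun s hs => (hf s (hsub hs)).mono hsub) left_mem_uIcc hft₀ right_mem_uIcc

/-- Part (iv) of Theorem 2 (t20): the vacuum condition
`c₁c₂ + c₂c₃ + c₃c₁ = 0` at `t = 0` is propagated in time by the eigenvalue
system `ċᵢ = -(1/2)·α·cᵢ + (1/8)·E` (with `α = c₁+c₂+c₃`,
`E = α² - (c₁²+c₂²+c₃²) = 2(c₁c₂+c₂c₃+c₃c₁)`). -/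
theorem vacuum_condition_propagates (J : Set ℝ) (hJ : J.OrdConnected) (h0 : (0 : ℝ) ∈ J)
    (c₁ c₂ c₃ α E : ℝ → ℝ)
    (hα : ∀ t : ℝ, α t = c₁ t + c₂ t + c₃ t)
    (hE : ∀ t : ℝ, E t = (α t) ^ 2 - ((c₁ t) ^ 2 + (c₂ t) ^ 2 + (c₃ t) ^ 2))
    (h1 : ∀ t ∈ J, HasDerivWithinAt c₁ (-(1/2) * α t * c₁ t + (1/8) * E t) J t)
    (h2 : ∀ t ∈ J, HasDerivWithinAt c₂ (-(1/2) * α t * c₂ t + (1/8) * E t) J t)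
    (h3 : ∀ t ∈ J, HasDerivWithinAt c₃ (-(1/2) * α t * c₃ t + (1/8) * E t) J t)
    (hinit : c₁ 0 * c₂ 0 + c₂ 0 * c₃ 0 + c₃ 0 * c₁ 0 = 0) :
    ∀ t ∈ J, c₁ t * c₂ t + c₂ t * c₃ t + c₃ t * c₁ t = 0 := by
  have hαc : ContinuousOn α J := by
    rw [funext hα]
    exact fun t ht => ((h1 t ht).continuousWithinAt.add (h2 t ht).continuousWithinAt).add
      (h3 t ht).continuousWithinAt
  have hderiv : ∀ t ∈ J, HasDerivWithinAt (fun t => c₁ t * c₂ t + c₂ t * c₃ t + c₃ t * c₁ t)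
      ((-(1/2) * α t) • (c₁ t * c₂ t + c₂ t * c₃ t + c₃ t * c₁ t)) J t := by
    intro t ht
    refine ((((h1 t ht).mul (h2 t ht)).add ((h2 t ht).mul (h3 t ht))).add
      ((h3 t ht).mul (h1 t ht))).congr_deriv ?_
    rw [smul_eq_mul, hE, hα]
    ring
  exact hJ.eqOn_zero_of_hasDerivWithinAt_smul_self (continuousOn_const.mul hαc) hderiv h0 hinit
end

section
/- Let ĉ₁, ĉ₂, ĉ₃ be real numbers with ĉ₁ĉ₂ + ĉ₂ĉ₃ + ĉ₃ĉ₁ = 0, and suppose there exist nonnegative reals f, g, h with ĉ₂ + ĉ₃ = f², ĉ₃ + ĉ₁ = g², ĉ₁ + ĉ₂ = h². Then g = f + h, or f = g + h, or h = f + g. -/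
/-!
Solving the three equations for the `cᵢ` turns `4 (c₁c₂ + c₂c₃ + c₃c₁)` into Heron's product
`(f + g + h)(-f + g + h)(f - g + h)(f + g - h)`, i.e. sixteen times the squared area of a
triangle with sides `f, g, h`. The vacuum condition makes this area vanish, so for nonnegative
sides one of them is the sum of the other two.
-/

section Heron

variable {R : Type*}

theorem heron_product_eq [CommRing R] (f g h : R) :
    (f + g + h) * (-f + g + h) * (f - g + h) * (f + g - h) =
      (g ^ 2 + h ^ 2 - f ^ 2) * (h ^ 2 + f ^ 2 - g ^ 2)
        + (h ^ 2 + f ^ 2 - g ^ 2) * (f ^ 2 + g ^ 2 - h ^ 2)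
        + (f ^ 2 + g ^ 2 - h ^ 2) * (g ^ 2 + h ^ 2 - f ^ 2) := by
  ring

theorem four_mul_pairwise_sum_eq_heron_product [CommRing R] {c₁ c₂ c₃ f g h : R}
    (h1 : c₂ + c₃ = f ^ 2) (h2 : c₃ + c₁ = g ^ 2) (h3 : c₁ + c₂ = h ^ 2) :
    4 * (c₁ * c₂ + c₂ * c₃ + c₃ * c₁) =
      (f + g + h) * (-f + g + h) * (f - g + h) * (f + g - h) := by
  have e1 : 2 * c₁ = g ^ 2 + h ^ 2 - f ^ 2 := by linear_combination h2 + h3 - h1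
  have e2 : 2 * c₂ = h ^ 2 + f ^ 2 - g ^ 2 := by linear_combination h3 + h1 - h2
  have e3 : 2 * c₃ = f ^ 2 + g ^ 2 - h ^ 2 := by linear_combination h1 + h2 - h3
  calc 4 * (c₁ * c₂ + c₂ * c₃ + c₃ * c₁)
      = 2 * c₁ * (2 * c₂) + 2 * c₂ * (2 * c₃) + 2 * c₃ * (2 * c₁) := by ring
    _ = _ := by rw [e1, e2, e3, heron_product_eq]

theorem degenerate_of_heron_product_eq_zero [CommRing R] [LinearOrder R] [IsStrictOrderedRing R]
    {f g h : R} (hf : 0 ≤ f) (hg : 0 ≤ g) (hh : 0 ≤ h)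
    (hP : (f + g + h) * (-f + g + h) * (f - g + h) * (f + g - h) = 0) :
    g = f + h ∨ f = g + h ∨ h = f + g := by
  rcases mul_eq_zero.mp hP with hP | hP
  · rcases mul_eq_zero.mp hP with hP | hP
    · rcases mul_eq_zero.mp hP with hP | hP
      · left; linarith
      · right; left; linear_combination -hP
    · left; linear_combination -hP
  · right; right; linear_combination -hP

end Heron

/-- In the proof of Theorem 3 (t22): if the eigenvalues `ĉᵢ` satisfy the vacuum
condition `ĉ₁ĉ₂ + ĉ₂ĉ₃ + ĉ₃ĉ₁ = 0` and their pairwise sums are squares of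
nonnegative reals `f, g, h`, then `f, g, h` form a degenerate triangle:
one of them is the sum of the other two. -/
theorem degenerate_triangle_relation (c₁ c₂ c₃ f g h : ℝ)
    (hf : 0 ≤ f) (hg : 0 ≤ g) (hh : 0 ≤ h)
    (hvac : c₁ * c₂ + c₂ * c₃ + c₃ * c₁ = 0)
    (h1 : c₂ + c₃ = f ^ 2) (h2 : c₃ + c₁ = g ^ 2) (h3 : c₁ + c₂ = h ^ 2) :
    g = f + h ∨ f = g + h ∨ h = f + g := by
  have hP := four_mul_pairwise_sum_eq_heron_product h1 h2 h3
  rw [hvac, mul_zero] at hP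
  exact degenerate_of_heron_product_eq_zero hf hg hh hP.symm
end

section
/- Let Λ ∈ ℝ and let ε, S, Q : ℝ → ℝ be functions that are continuous at 0, such that 8πε(t) = (1/2)S(t) − Λ + (1/8)Q(t) for all t > 0 and 8πε(t) = −(1/2)S(t) + Λ + (1/8)Q(t) for all t < 0. Then S(0) = 2Λ. -/
open Real

open Filter Topology in
theorem ContinuousAt.eq_of_eqOn {X Y : Type*} [TopologicalSpace X] [TopologicalSpace Y]
    [T2Space Y] {f g : X → Y} {s : Set X} {a : X} [(𝓝[s] a).NeBot]
    (hf : ContinuousAt f a) (hg : ContinuousAt g a) (hfg : Set.EqOn f g s) : f a = g a :=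
  tendsto_nhds_unique_of_eventuallyEq (hf.tendsto.mono_left nhdsWithin_le_nhds)
    (hg.tendsto.mono_left nhdsWithin_le_nhds) (eventually_nhdsWithin_of_forall hfg)

/-- Necessary direction of Theorem 4 (t25): if the tt-Einstein equation
`8πε = (η/2)S - ηΛ + (1/8)Q` holds with `η = -1` for `t > 0` (Lorentzian side)
and `η = +1` for `t < 0` (Riemannian side), and `ε, S, Q` are continuous at the
hypersurface `t = 0`, then the scalar curvature there satisfies `S(0) = 2Λ`. -/
theorem scalar_curvature_at_signature_change (Λ : ℝ) (ε S Q : ℝ → ℝ)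
    (hε : ContinuousAt ε 0) (hS : ContinuousAt S 0) (hQ : ContinuousAt Q 0)
    (hpos : ∀ t : ℝ, 0 < t →
      8 * π * ε t = (1/2) * S t - Λ + (1/8) * Q t)
    (hneg : ∀ t : ℝ, t < 0 →
      8 * π * ε t = -(1/2) * S t + Λ + (1/8) * Q t) :
    S 0 = 2 * Λ := by
  have hε' : ContinuousAt (fun t => 8 * π * ε t) 0 := by fun_prop
  have lorentzian : 8 * π * ε 0 = (1/2) * S 0 - Λ + (1/8) * Q 0 :=
    hε'.eq_of_eqOn (s := Set.Ioi 0) (by fun_prop) hpos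
  have riemannian : 8 * π * ε 0 = -(1/2) * S 0 + Λ + (1/8) * Q 0 :=
    hε'.eq_of_eqOn (s := Set.Iio 0) (by fun_prop) hneg
  linarith
end

section
/- Let Λ ∈ ℝ and let ε̃, S, Q : ℝ → ℝ be functions that are continuous at 0, such that 8πε̃(t) = (1/2)S(t) − Λ + (1/8)Q(t) for all t > 0 and 8πε̃(t) = (1/2)S(t) − Λ − (1/8)Q(t) for all t < 0. Then Q(0) = 0. -/
open Real Filter Topology Set

/- Both sides of the signature-weighted equation are continuous at `0`, so each of the two
one-sided identities extends to `t = 0`. The two resulting equations for `8πε̃(0)` differ only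
in the sign of `Q(0)/8`, hence `Q(0) = 0`. -/

theorem ContinuousAt.eq_of_eventuallyEq_nhdsWithin {X Y : Type*} [TopologicalSpace X]
    [TopologicalSpace Y] [T2Space Y] {f g : X → Y} {s : Set X} {a : X} [(𝓝[s] a).NeBot]
    (hf : ContinuousAt f a) (hg : ContinuousAt g a) (hfg : f =ᶠ[𝓝[s] a] g) : f a = g a :=
  tendsto_nhds_unique ((hf.mono_left nhdsWithin_le_nhds).congr' hfg)
    (hg.mono_left nhdsWithin_le_nhds)

section LinearOrder

variable {α Y : Type*} [TopologicalSpace α] [LinearOrder α] [OrderTopology α]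
  [DenselyOrdered α] [TopologicalSpace Y] [T2Space Y] {f g : α → Y} {a : α}

theorem ContinuousAt.eq_of_eqOn_Ioi [NoMaxOrder α] (hf : ContinuousAt f a)
    (hg : ContinuousAt g a) (hfg : EqOn f g (Ioi a)) : f a = g a :=
  hf.eq_of_eventuallyEq_nhdsWithin hg (eventually_nhdsWithin_of_forall hfg)

theorem ContinuousAt.eq_of_eqOn_Iio [NoMinOrder α] (hf : ContinuousAt f a)
    (hg : ContinuousAt g a) (hfg : EqOn f g (Iio a)) : f a = g a :=
  hf.eq_of_eventuallyEq_nhdsWithin hg (eventually_nhdsWithin_of_forall hfg)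

end LinearOrder

/-- Necessary direction of Theorem 6 (t40): if the tt-Einstein equation
multiplied by the signature factor, `8πηε = (1/2)S - Λ + (η/8)Q`, holds with
`η = +1` for `t > 0` and `η = -1` for `t < 0`, and the modified energy density
`ε̃ = ηε`, `S` and `Q` are continuous at `0`, then `Q(0) = 0`, i.e. the second
fundamental form `ĉ` of the hypersurface satisfies `(tr ĉ)² - |ĉ|² = 0`. -/
theorem second_fundamental_form_null_condition (Λ : ℝ) (εtilde S Q : ℝ → ℝ)
    (hε : ContinuousAt εtilde 0) (hS : ContinuousAt S 0) (hQ : ContinuousAt Q 0)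
    (hpos : ∀ t : ℝ, 0 < t →
      8 * π * εtilde t = (1/2) * S t - Λ + (1/8) * Q t)
    (hneg : ∀ t : ℝ, t < 0 →
      8 * π * εtilde t = (1/2) * S t - Λ - (1/8) * Q t) :
    Q 0 = 0 := by
  have hright : 8 * π * εtilde 0 = (1/2) * S 0 - Λ + (1/8) * Q 0 :=
    ContinuousAt.eq_of_eqOn_Ioi (f := fun t => 8 * π * εtilde t)
      (g := fun t => (1/2) * S t - Λ + (1/8) * Q t) (by fun_prop) (by fun_prop) hpos
  have hleft : 8 * π * εtilde 0 = (1/2) * S 0 - Λ - (1/8) * Q 0 :=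
    ContinuousAt.eq_of_eqOn_Iio (f := fun t => 8 * π * εtilde t)
      (g := fun t => (1/2) * S t - Λ - (1/8) * Q t) (by fun_prop) (by fun_prop) hneg
  linarith
end
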